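/- Let E be a Hilbert C*-module over a unital C*-algebra satisfying property [H] and C ∈ K(E) compact. If L = I − C is injective, then L is surjective and its inverse is bounded; hence for every f ∈ E the equation x − Cx = f has a unique solution x = L^{-1} f depending continuously on f. -/

import Mathlib

open scoped RightActions
open CStarModule Filter Topology

/-- The definition of `CStarModule` as it stood in the older Mathlib: a *right* module over `A`
(acting through `Aᵐᵒᵖ`), with `⟪x, y <• a⟫ = ⟪x, y⟫ * a`. -/
class CStarModuleRight (A E : Type*) [NonUnitalSemiring A] [StarRing A] [Module ℂ A]
    [AddCommGroup E] [Module ℂ E] [PartialOrder A] [SMul Aᵐᵒᵖ E] [Norm A] [Norm E]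
    extends Inner A E where
  inner_add_right {x} {y} {z} : inner x (y + z) = inner x y + inner x z
  inner_self_nonneg {x} : 0 ≤ inner x x
  inner_self {x} : inner x x = 0 ↔ x = 0
  inner_op_smul_right {a : A} {x y : E} : inner x (y <• a) = inner x y * a
  inner_smul_right_complex {z : ℂ} {x} {y} : inner x (z • y) = z • inner x y
  star_inner x y : star (inner x y) = inner y x
  norm_eq_sqrt_norm_inner_self x : ‖x‖ = √‖inner x x‖

section
variable (A E : Type*) [CStarAlgebra A] [PartialOrder A] [StarOrderedRing A]
  [NormedAddCommGroup E] [NormedSpace ℂ E] [Module Aᵐᵒᵖ E] [CStarModuleRight A E]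

/-- The rank-one operator predicate: `T = θ_{u,v}`, i.e. `T z = u⟪v, z⟫`. -/
def IsRankOne (T : E →L[ℂ] E) : Prop := ∃ u v : E, ∀ z, T z = u <• (inner (𝕜 := A) v z)

/-- The set `K(E)` of compact operators: the closure of the linear span of rank-one operators. -/
def compactOp : Set (E →L[ℂ] E) :=
  closure (Submodule.span ℂ {T : E →L[ℂ] E | IsRankOne A E T} : Set (E →L[ℂ] E))

/-- Property [H]: every bounded sequence has a weakly convergent subsequence. -/
def PropertyH : Prop :=
  ∀ ζ : ℕ → E, Bornology.IsBounded (Set.range ζ) →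
    ∃ φ : ℕ → ℕ, StrictMono φ ∧ ∃ z : E, ∀ v : E,
      Tendsto (fun k => inner (𝕜 := A) v (ζ (φ k))) atTop (nhds (inner (𝕜 := A) v z))

section auxlemmas
variable {A E : Type*} [CStarAlgebra A] [PartialOrder A] [StarOrderedRing A]
  [NormedAddCommGroup E] [NormedSpace ℂ E] [Module Aᵐᵒᵖ E] [CStarModuleRight A E]

lemma norm_op_smul_le' (x : E) (a : A) : ‖x <• a‖ ≤ ‖x‖ * ‖a‖ := by
  have hsq : ∀ y : E, ‖y‖ ^ 2 = ‖inner (𝕜 := A) y y‖ := fun y => by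
    rw [CStarModuleRight.norm_eq_sqrt_norm_inner_self (A := A) y, Real.sq_sqrt (norm_nonneg _)]
  have hleft : inner (𝕜 := A) (x <• a) x = star a * inner (𝕜 := A) x x := by
    rw [← CStarModuleRight.star_inner (A := A) x (x <• a), CStarModuleRight.inner_op_smul_right,
      star_mul, CStarModuleRight.star_inner]
  have h1 : ‖x <• a‖ ^ 2 ≤ (‖x‖ * ‖a‖) ^ 2 := by
    rw [hsq, CStarModuleRight.inner_op_smul_right, hleft, mul_pow, hsq]
    calc ‖star a * inner (𝕜 := A) x x * a‖
        ≤ ‖star a‖ * ‖inner (𝕜 := A) x x‖ * ‖a‖ := norm_mul₃_le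
      _ = ‖inner (𝕜 := A) x x‖ * ‖a‖ ^ 2 := by rw [norm_star]; ring
  nlinarith [norm_nonneg (x <• a), norm_nonneg x, norm_nonneg a,
    mul_nonneg (norm_nonneg x) (norm_nonneg a)]

lemma tendsto_op_smul' (x : E) {a : ℕ → A} {b : A}
    (h : Tendsto a atTop (nhds b)) :
    Tendsto (fun k => x <• (a k)) atTop (nhds (x <• b)) := by
  rw [tendsto_iff_norm_sub_tendsto_zero]
  have hb : Tendsto (fun k => ‖x‖ * ‖a k - b‖) atTop (nhds 0) := by
    have := (tendsto_iff_norm_sub_tendsto_zero.mp h).const_mul ‖x‖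
    simpa using this
  refine squeeze_zero (fun k => norm_nonneg _) (fun k => ?_) hb
  have heq : x <• (a k) - x <• b = x <• (a k - b) := by
    rw [MulOpposite.op_sub, sub_smul]
  rw [heq]
  exact norm_op_smul_le' x _

/-- A compact operator maps bounded weakly convergent sequences to norm convergent ones. -/
lemma compact_weak_norm {C : E →L[ℂ] E} (hC : C ∈ compactOp A E)
    {ζ : ℕ → E} {z : E} {M : ℝ} (hM : ∀ k, ‖ζ k‖ ≤ M)
    (hw : ∀ v : E, Tendsto (fun k => inner (𝕜 := A) v (ζ k)) atTop
      (nhds (inner (𝕜 := A) v z))) :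
    Tendsto (fun k => C (ζ k)) atTop (nhds (C z)) := by
  have hspan : ∀ T ∈ Submodule.span ℂ {T : E →L[ℂ] E | IsRankOne A E T},
      Tendsto (fun k => T (ζ k)) atTop (nhds (T z)) := by
    intro T hT
    induction hT using Submodule.span_induction with
    | mem T hT =>
      obtain ⟨u, v, huv⟩ := hT
      simp only [huv]
      exact tendsto_op_smul' u (hw v)
    | zero => simp only [ContinuousLinearMap.zero_apply]; exact tendsto_const_nhds
    | add f g _ _ hf hg =>
      simp only [ContinuousLinearMap.add_apply]; exact hf.add hg
    | smul c f _ hf =>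
      simp only [ContinuousLinearMap.smul_apply]; exact hf.const_smul c
  rw [Metric.tendsto_atTop]
  intro ε hε
  have hMnn : 0 ≤ M := le_trans (norm_nonneg _) (hM 0)
  set B : ℝ := M + ‖z‖ + 1 with hB
  have hBpos : 0 < B := by positivity
  obtain ⟨T, hTmem, hTd⟩ := Metric.mem_closure_iff.mp hC (ε / 3 / B) (by positivity)
  obtain ⟨N, hN⟩ := (Metric.tendsto_atTop.mp (hspan T hTmem)) (ε / 3) (by positivity)
  refine ⟨N, fun k hk => ?_⟩
  have hCT : ‖C - T‖ < ε / 3 / B := by rwa [dist_eq_norm] at hTd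
  have h1 : ‖(C - T) (ζ k)‖ ≤ ‖C - T‖ * M := by
    calc ‖(C - T) (ζ k)‖ ≤ ‖C - T‖ * ‖ζ k‖ := (C - T).le_opNorm _
      _ ≤ ‖C - T‖ * M := by gcongr; exact hM k
  have h2 : ‖(T - C) z‖ ≤ ‖C - T‖ * ‖z‖ := by
    calc ‖(T - C) z‖ ≤ ‖T - C‖ * ‖z‖ := (T - C).le_opNorm _
      _ = ‖C - T‖ * ‖z‖ := by rw [norm_sub_rev T C]
  have h3 : ‖T (ζ k) - T z‖ < ε / 3 := by
    have := hN k hk; rwa [dist_eq_norm] at this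
  have hkey : C (ζ k) - C z = (C - T) (ζ k) + (T (ζ k) - T z) + (T - C) z := by
    simp only [ContinuousLinearMap.sub_apply]; abel
  rw [dist_eq_norm, hkey]
  have hbound : ‖C - T‖ * M + ‖C - T‖ * ‖z‖ < 2 * (ε / 3) := by
    have : ‖C - T‖ * M + ‖C - T‖ * ‖z‖ = ‖C - T‖ * (M + ‖z‖) := by ring
    rw [this]
    calc ‖C - T‖ * (M + ‖z‖) ≤ ‖C - T‖ * B := by
          have hMB : M + ‖z‖ ≤ B := by rw [hB]; linarith
          exact mul_le_mul_of_nonneg_left hMB (norm_nonneg _)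
      _ < (ε / 3 / B) * B := by
          gcongr
      _ = ε / 3 := by field_simp
      _ < 2 * (ε / 3) := by linarith
  have h4 : ‖(C - T) (ζ k) + (T (ζ k) - T z) + (T - C) z‖
      ≤ ‖(C - T) (ζ k)‖ + ‖T (ζ k) - T z‖ + ‖(T - C) z‖ := norm_add₃_le
  linarith

/-- Riesz-type lemma keeping track of where the vector lives. -/
lemma riesz_aux (F : Submodule ℂ E) (hFc : IsClosed (F : Set E)) {x : E} (hx : x ∉ F) :
    ∃ u : E, ‖u‖ = 1 ∧ (∃ y ∈ F, ∃ c : ℂ, u = c • (x - y)) ∧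
      ∀ z ∈ F, (1 : ℝ) / 2 ≤ ‖u - z‖ := by
  have hne : (F : Set E).Nonempty := ⟨0, F.zero_mem⟩
  have hd : 0 < Metric.infDist x (F : Set E) :=
    (hFc.notMem_iff_infDist_pos hne).mp hx
  set d := Metric.infDist x (F : Set E) with hdd
  obtain ⟨y, hyF, hxy⟩ := (Metric.infDist_lt_iff hne).mp
    (show d < 2 * d by linarith)
  set w := x - y with hwdef
  have hwlow : ∀ z ∈ F, d ≤ ‖w - z‖ := by
    intro z hz
    have : y + z ∈ (F : Set E) := F.add_mem hyF hz
    have h : d ≤ dist x (y + z) := Metric.infDist_le_dist_of_mem this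
    rw [dist_eq_norm] at h
    have : x - (y + z) = w - z := by rw [hwdef]; abel
    rwa [this] at h
  have hwne : w ≠ 0 := by
    intro h0
    have := hwlow 0 F.zero_mem
    rw [h0] at this; simp at this; linarith
  have hwpos : 0 < ‖w‖ := norm_pos_iff.mpr hwne
  have hwlt : ‖w‖ < 2 * d := by rwa [hwdef, ← dist_eq_norm]
  refine ⟨((‖w‖ : ℂ))⁻¹ • w, ?_, ⟨y, hyF, _, rfl⟩, ?_⟩
  · rw [norm_smul]
    simp [norm_inv, hwpos.ne']
  · intro z hz
    have hzF : ((‖w‖ : ℂ)) • z ∈ F := F.smul_mem _ hz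
    have hcnz : (‖w‖ : ℂ) ≠ 0 := by exact_mod_cast hwpos.ne'
    have heq : ((‖w‖ : ℂ))⁻¹ • w - z = ((‖w‖ : ℂ))⁻¹ • (w - (‖w‖ : ℂ) • z) := by
      rw [smul_sub ((‖w‖ : ℂ))⁻¹ w ((‖w‖ : ℂ) • z), inv_smul_smul₀ hcnz]
    rw [heq, norm_smul]
    have h1 : ‖((‖w‖ : ℂ))⁻¹‖ = ‖w‖⁻¹ := by
      simp [norm_inv]
    rw [h1]
    have h2 : d ≤ ‖w - (‖w‖ : ℂ) • z‖ := hwlow _ hzF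
    calc (1 : ℝ) / 2 = (2 * d)⁻¹ * d := by field_simp
      _ ≤ ‖w‖⁻¹ * ‖w - (‖w‖ : ℂ) • z‖ :=
          mul_le_mul (inv_anti₀ hwpos hwlt.le) h2 hd.le (by positivity)

end auxlemmas

/-- if `L = I − C` is injective (with `C` compact, property [H]), then `L` is
surjective with bounded inverse; hence `x − Cx = f` has a unique solution depending
continuously on `f`. -/
theorem stmt13 [CompleteSpace E] (hH : PropertyH A E) (C : E →L[ℂ] E) (hC : C ∈ compactOp A E)
    (hinj : Function.Injective ⇑(1 - C : E →L[ℂ] E)) :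
    Function.Surjective ⇑(1 - C : E →L[ℂ] E) ∧
    ∃ S : E →L[ℂ] E, (∀ f : E, (1 - C) (S f) = f) ∧ ∀ x : E, S ((1 - C) x) = x := by
  set L : E →L[ℂ] E := 1 - C with hL
  -- Step 1: L is bounded below.
  have hbb : ∃ c : ℝ, 0 < c ∧ ∀ x : E, c * ‖x‖ ≤ ‖L x‖ := by
    by_contra hcon
    push_neg at hcon
    have hseq : ∀ n : ℕ, ∃ u : E, ‖u‖ = 1 ∧ ‖L u‖ < 1 / (n + 1 : ℝ) := by
      intro n
      obtain ⟨x, hx⟩ := hcon (1 / (n + 1 : ℝ)) (by positivity)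
      have hx0 : x ≠ 0 := by rintro rfl; simp at hx
      have hxn : (0 : ℝ) < ‖x‖ := norm_pos_iff.mpr hx0
      refine ⟨((‖x‖ : ℂ))⁻¹ • x, ?_, ?_⟩
      · rw [norm_smul]; simp [hxn.ne']
      · rw [map_smul, norm_smul]
        have h1 : ‖((‖x‖ : ℂ))⁻¹‖ = ‖x‖⁻¹ := by simp [norm_inv]
        rw [h1]
        calc ‖x‖⁻¹ * ‖L x‖ < ‖x‖⁻¹ * (1 / (n + 1 : ℝ) * ‖x‖) :=
              mul_lt_mul_of_pos_left hx (inv_pos.mpr hxn)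
          _ = 1 / (n + 1 : ℝ) := by field_simp
    choose u hu1 hu2 using hseq
    have hub : Bornology.IsBounded (Set.range u) := by
      apply Bornology.IsBounded.subset (Metric.isBounded_closedBall (x := (0 : E)) (r := 1))
      rintro _ ⟨n, rfl⟩
      simp [Metric.mem_closedBall, hu1 n]
    obtain ⟨φ, hφ, z, hz⟩ := hH u hub
    have hCw : Tendsto (fun k => C (u (φ k))) atTop (nhds (C z)) :=
      compact_weak_norm hC (M := 1) (fun k => (hu1 (φ k)).le) hz
    have hL0 : Tendsto (fun k => L (u (φ k))) atTop (nhds 0) := by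
      rw [tendsto_zero_iff_norm_tendsto_zero]
      refine squeeze_zero (fun k => norm_nonneg _) (fun k => ?_)
        tendsto_one_div_add_atTop_nhds_zero_nat
      calc ‖L (u (φ k))‖ ≤ 1 / ((φ k : ℝ) + 1) := (hu2 (φ k)).le
        _ ≤ 1 / ((k : ℝ) + 1) := by
            have hk : (k : ℝ) ≤ (φ k : ℝ) := by exact_mod_cast hφ.le_apply
            apply one_div_le_one_div_of_le (by positivity)
            linarith
    have hulim : Tendsto (fun k => u (φ k)) atTop (nhds (C z)) := by
      have hfun : (fun k => u (φ k)) = fun k => L (u (φ k)) + C (u (φ k)) := by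
        funext k
        simp [hL, ContinuousLinearMap.sub_apply]
      rw [hfun]
      simpa using hL0.add hCw
    have hnz : ‖C z‖ = 1 := by
      have h1 : Tendsto (fun k => ‖u (φ k)‖) atTop (nhds ‖C z‖) := hulim.norm
      have h2 : (fun k => ‖u (φ k)‖) = fun _ => (1 : ℝ) := funext fun k => hu1 _
      rw [h2] at h1
      exact (tendsto_nhds_unique tendsto_const_nhds h1).symm
    have hLCz : L (C z) = 0 := by
      have h1 : Tendsto (fun k => L (u (φ k))) atTop (nhds (L (C z))) :=
        (L.continuous.tendsto _).comp hulim
      exact tendsto_nhds_unique h1 hL0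
    have hCz0 : C z = 0 := hinj (by simpa using hLCz)
    rw [hCz0] at hnz
    simp at hnz
  obtain ⟨c, hc, hlow⟩ := hbb
  -- Injectivity and lower bounds for powers of L.
  have hinjn : ∀ n : ℕ, Function.Injective ⇑(L ^ n) := by
    intro n
    induction n with
    | zero => intro a b h; simpa using h
    | succ n ih =>
      intro a b h
      rw [pow_succ L n] at h
      simp only [ContinuousLinearMap.mul_apply] at h
      exact hinj (ih h)
  have hpow : ∀ n : ℕ, ∀ x : E, c ^ n * ‖x‖ ≤ ‖(L ^ n) x‖ := by
    intro n
    induction n with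
    | zero => intro x; simp
    | succ n ih =>
      intro x
      rw [pow_succ L n]
      simp only [ContinuousLinearMap.mul_apply]
      calc c ^ (n + 1) * ‖x‖ = c ^ n * (c * ‖x‖) := by ring
        _ ≤ c ^ n * ‖L x‖ := mul_le_mul_of_nonneg_left (hlow x) (by positivity)
        _ ≤ ‖(L ^ n) (L x)‖ := ih (L x)
  have hFclosed : ∀ n : ℕ, IsClosed ((LinearMap.range (L ^ n).toLinearMap : Submodule ℂ E) : Set E) := by
    intro n
    have hcn : (0 : ℝ) < c ^ n := by positivity
    have hanti : AntilipschitzWith (⟨(c ^ n)⁻¹, by positivity⟩ : NNReal) ⇑(L ^ n) := by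
      apply ContinuousLinearMap.antilipschitz_of_bound
      intro x
      have h1 : ‖x‖ = (c ^ n)⁻¹ * (c ^ n * ‖x‖) := by field_simp
      rw [h1]
      have h2 : (c ^ n)⁻¹ * (c ^ n * ‖x‖) ≤ (c ^ n)⁻¹ * ‖(L ^ n) x‖ :=
        mul_le_mul_of_nonneg_left (hpow n x) (by positivity)
      exact h2
    have hcr : IsClosed (Set.range ⇑(L ^ n)) :=
      hanti.isClosed_range (L ^ n).uniformContinuous
    rw [LinearMap.coe_range, ContinuousLinearMap.coe_coe]; exact hcr
  -- Step 2: surjectivity.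
  have hsurj : Function.Surjective ⇑L := by
    by_contra hns
    simp only [Function.Surjective, not_forall] at hns
    obtain ⟨f, hf⟩ := hns
    push_neg at hf
    set Fn : ℕ → Submodule ℂ E := fun n => LinearMap.range (L ^ n).toLinearMap with hFn
    have hstep : ∀ n, Fn (n + 1) ≤ Fn n := by
      intro n y hy
      obtain ⟨g, rfl⟩ := LinearMap.mem_range.mp hy
      refine LinearMap.mem_range.mpr ⟨L g, ?_⟩
      rw [pow_succ L n]
      simp [ContinuousLinearMap.mul_apply]
    have hmono : Antitone Fn := antitone_nat_of_succ_le hstep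
    have hLmap : ∀ n, ∀ x ∈ Fn n, L x ∈ Fn (n + 1) := by
      intro n x hx
      obtain ⟨g, rfl⟩ := LinearMap.mem_range.mp hx
      refine LinearMap.mem_range.mpr ⟨g, ?_⟩
      rw [pow_succ' L n]
      simp [ContinuousLinearMap.mul_apply]
    have hnotin : ∀ n, (L ^ n) f ∉ Fn (n + 1) := by
      intro n hmem
      obtain ⟨g, hg⟩ := LinearMap.mem_range.mp hmem
      rw [pow_succ L n] at hg
      simp only [ContinuousLinearMap.coe_coe, ContinuousLinearMap.mul_apply] at hg
      exact hf g (hinjn n hg)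
    have hchoice : ∀ n : ℕ, ∃ u : E, ‖u‖ = 1 ∧ u ∈ Fn n ∧
        ∀ z ∈ Fn (n + 1), (1 : ℝ) / 2 ≤ ‖u - z‖ := by
      intro n
      obtain ⟨u, hu1, ⟨y, hyF, c', rfl⟩, hu3⟩ :=
        riesz_aux (Fn (n + 1)) (hFclosed (n + 1)) (hnotin n)
      refine ⟨_, hu1, ?_, hu3⟩
      have h1 : (L ^ n) f ∈ Fn n := LinearMap.mem_range.mpr ⟨f, rfl⟩
      have h2 : y ∈ Fn n := hstep n hyF
      exact (Fn n).smul_mem _ ((Fn n).sub_mem h1 h2)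
    choose x hx1 hx2 hx3 using hchoice
    have hxb : Bornology.IsBounded (Set.range x) := by
      apply Bornology.IsBounded.subset (Metric.isBounded_closedBall (x := (0 : E)) (r := 1))
      rintro _ ⟨n, rfl⟩
      simp [Metric.mem_closedBall, hx1 n]
    obtain ⟨φ, hφ, z, hz⟩ := hH x hxb
    have hCx : Tendsto (fun k => C (x (φ k))) atTop (nhds (C z)) :=
      compact_weak_norm hC (M := 1) (fun k => (hx1 (φ k)).le) hz
    have hcauchy := hCx.cauchySeq
    rw [Metric.cauchySeq_iff] at hcauchy
    obtain ⟨N, hN⟩ := hcauchy (1 / 2) (by norm_num)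
    have hlt := hN (N + 1) (by omega) N (by omega)
    have hnm : φ N < φ (N + 1) := hφ (by omega)
    have hw1 : L (x (φ N)) ∈ Fn (φ N + 1) := hLmap _ _ (hx2 _)
    have hw2 : x (φ (N + 1)) ∈ Fn (φ N + 1) :=
      hmono (show φ N + 1 ≤ φ (N + 1) by omega) (hx2 _)
    have hw3 : L (x (φ (N + 1))) ∈ Fn (φ N + 1) :=
      hmono (show φ N + 1 ≤ φ (N + 1) + 1 by omega) (hLmap _ _ (hx2 _))
    have hwmem : L (x (φ N)) + x (φ (N + 1)) - L (x (φ (N + 1))) ∈ Fn (φ N + 1) :=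
      Submodule.sub_mem _ (Submodule.add_mem _ hw1 hw2) hw3
    have hkey : x (φ N) - (L (x (φ N)) + x (φ (N + 1)) - L (x (φ (N + 1)))) =
        C (x (φ N)) - C (x (φ (N + 1))) := by
      simp only [hL, ContinuousLinearMap.sub_apply, ContinuousLinearMap.one_apply]
      abel
    have hge : (1 : ℝ) / 2 ≤ dist (C (x (φ (N + 1)))) (C (x (φ N))) := by
      rw [dist_eq_norm, norm_sub_rev, ← hkey]
      exact hx3 _ _ hwmem
    linarith
  -- Step 3: build the continuous inverse.
  have hker : LinearMap.ker (L : E →ₗ[ℂ] E) = ⊥ := LinearMap.ker_eq_bot.mpr hinj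
  have hrange : LinearMap.range (L : E →ₗ[ℂ] E) = ⊤ := LinearMap.range_eq_top.mpr hsurj
  let e := ContinuousLinearEquiv.ofBijective L hker hrange
  have happ : ∀ x : E, e x = L x := fun x => rfl
  refine ⟨hsurj, (e.symm : E →L[ℂ] E), fun g => ?_, fun x => ?_⟩
  · have h1 := e.apply_symm_apply g
    rw [happ] at h1
    simpa using h1
  · have h1 := e.symm_apply_apply x
    rw [← happ] at *
    simpa [happ] using h1

end
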